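/- Fix integers n ≥ 1 and m ≥ 1, and let 𝒮^r_n be the family of strings over the alphabet {a, b₁, ..., b_m} obtained from S_n by independently replacing each occurrence of b with one of the symbols b₁, ..., b_m. Then |𝒮^r_n| = m^{1+⌊log₂ n⌋}, and every S ∈ 𝒮^r_n satisfies δ(S) ≤ m + 1. -/

import Mathlib

/-- The set of distinct length-`k` contiguous substrings of `S`. -/
def substrings {α : Type} [DecidableEq α] (S : List α) (k : ℕ) : Finset (List α) :=
  ((Finset.range (S.length + 1)).image (fun i => (S.drop i).take k)).filter
    (fun t => t.length = k)

/-- `d_k(S)`: the number of distinct length-`k` substrings of `S`. -/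
def subCount {α : Type} [DecidableEq α] (S : List α) (k : ℕ) : ℕ :=
  (substrings S k).card

/-- The measure `δ(S) = max { d_k(S)/k : 1 ≤ k ≤ |S| }` (with value 0 for the empty string). -/
def delta {α : Type} [DecidableEq α] (S : List α) : ℚ :=
  if h : S = [] then 0
  else
    (Finset.Icc 1 S.length).sup'
      (Finset.nonempty_Icc.mpr (Nat.one_le_iff_ne_zero.mpr
        (fun h0 => h (List.length_eq_zero_iff.mp h0))))
      (fun k => (subCount S k : ℚ) / k)

/-- `Sn n`: the length-`n` prefix of the infinite string `S_∞` over `{a, b}`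
(`a = false`, `b = true`) whose `i`-th character (1-based) is `b` iff `i` is a power of 2. -/
def Sn (n : ℕ) : List Bool :=
  (List.range n).map (fun i => (List.range (i + 2)).any (fun j => i + 1 == 2 ^ j))

/-- `𝒮^r_n`: the family of strings over the alphabet `{a, b₁, ..., b_m}`
(encoded over `ℕ`, with `a = 0` and `b_r = r` for `r ∈ [1..m]`) obtained from `S_n`
by independently replacing each occurrence of `b` with one of `b₁, ..., b_m`. -/
def SRfamily (n m : ℕ) : Set (List ℕ) :=
  { S | S.length = n ∧ ∀ i, i < n →
      (if (Sn n).getD i false = true then S.getD i 0 ∈ Finset.Icc 1 m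
       else S.getD i 0 = 0) }

/-!
The letters `b` of `S_n` sit at the 0-based positions `2^j - 1` with `j ≤ ⌊log₂ n⌋`, and each
independently takes one of `m` values, which gives the count.

For `δ`, two nonzero positions `p < q` of any `S ∈ 𝒮^r_n` satisfy `2p < q`. Hence a window of
length `k` starting at `i ≥ k - 1` contains at most one nonzero letter, so it is one of the
`km + 1` words of length `k` over `{0, …, m}` with at most one nonzero letter; the other `k - 1`
starting positions add at most `k - 1` windows, and `d_k(S) ≤ (m + 1) k`.
-/

open Finset

lemma Sn_getD_eq_true_iff {n i : ℕ} (hi : i < n) :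
    (Sn n).getD i false = true ↔ ∃ j, i + 1 = 2 ^ j := by
  rw [Sn, List.getD_eq_getElem _ _ (by simpa using hi)]
  simp only [List.getElem_map, List.getElem_range, List.any_eq_true, List.mem_range, beq_iff_eq]
  refine ⟨fun ⟨j, _, hj⟩ => ⟨j, hj⟩, fun ⟨j, hj⟩ => ⟨j, ?_, hj⟩⟩
  have : j < 2 ^ j := Nat.lt_two_pow_self
  omega

lemma filter_Sn_eq_image {n : ℕ} (hn : n ≠ 0) :
    (range n).filter (fun i => (Sn n).getD i false) =
      (range (Nat.log 2 n + 1)).image (fun j => 2 ^ j - 1) := by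
  ext i
  simp only [mem_filter, mem_range, mem_image, Nat.lt_succ_iff]
  constructor
  · rintro ⟨hi, hb⟩
    obtain ⟨j, hj⟩ := (Sn_getD_eq_true_iff hi).1 hb
    exact ⟨j, Nat.le_log_of_pow_le (by norm_num) (by omega), by omega⟩
  · rintro ⟨j, hj, rfl⟩
    have hjn : 2 ^ j ≤ n := (Nat.pow_le_pow_right two_pos hj).trans (Nat.pow_log_le_self 2 hn)
    have : 1 ≤ 2 ^ j := Nat.one_le_two_pow
    exact ⟨by omega, (Sn_getD_eq_true_iff (by omega)).2 ⟨j, by omega⟩⟩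

lemma card_filter_Sn {n : ℕ} (hn : n ≠ 0) :
    ((range n).filter (fun i => (Sn n).getD i false)).card = Nat.log 2 n + 1 := by
  rw [filter_Sn_eq_image hn, card_image_of_injective, card_range]
  intro a b hab
  have : 2 ^ a = 2 ^ b := by
    have := @Nat.one_le_two_pow a
    have := @Nat.one_le_two_pow b
    simp only at hab
    omega
  exact Nat.pow_right_injective le_rfl this

def SRchoices (n m : ℕ) (i : Fin n) : Finset ℕ :=
  if (Sn n).getD i false then Icc 1 m else {0}

lemma mem_SRchoices {n m x : ℕ} {i : Fin n} :
    x ∈ SRchoices n m i ↔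
      if (Sn n).getD i false = true then x ∈ Icc 1 m else x = 0 := by
  unfold SRchoices
  split_ifs <;> simp

lemma SRfamily_eq_image_ofFn (n m : ℕ) :
    SRfamily n m = ↑((Fintype.piFinset (SRchoices n m)).image List.ofFn) := by
  ext S
  simp only [SRfamily, Set.mem_ofPred_eq, coe_image, Set.mem_image, mem_coe,
    Fintype.mem_piFinset, mem_SRchoices]
  constructor
  · rintro ⟨rfl, hS⟩
    refine ⟨fun i => S.getD i 0, fun i => hS i i.2, ?_⟩
    exact List.ext_getElem (by simp) fun p _ hp => by simp
  · rintro ⟨g, hg, rfl⟩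
    refine ⟨List.length_ofFn, fun i hi => ?_⟩
    rw [List.getD_eq_getElem (List.ofFn g) _ (by simpa using hi), List.getElem_ofFn]
    exact hg ⟨i, hi⟩

lemma ncard_SRfamily {n : ℕ} (m : ℕ) (hn : n ≠ 0) :
    (SRfamily n m).ncard = m ^ (Nat.log 2 n + 1) := by
  rw [SRfamily_eq_image_ofFn, Set.ncard_coe_finset,
    card_image_of_injective _ List.ofFn_injective, Fintype.card_piFinset]
  calc ∏ i, (SRchoices n m i).card
      = ∏ i ∈ range n, if (Sn n).getD i false then m else 1 := by
        rw [← Fin.prod_univ_eq_prod_range]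
        refine prod_congr rfl fun i _ => ?_
        unfold SRchoices
        split_ifs <;> simp
    _ = m ^ (Nat.log 2 n + 1) := by
        rw [prod_ite, prod_const, prod_const, one_pow, mul_one, card_filter_Sn hn]

lemma mem_substrings_iff {α : Type} [DecidableEq α] {S t : List α} {k : ℕ} :
    t ∈ substrings S k ↔ ∃ i, i + k ≤ S.length ∧ (S.drop i).take k = t := by
  simp only [substrings, mem_filter, mem_image, mem_range]
  constructor
  · rintro ⟨⟨i, hi, rfl⟩, hlen⟩
    exact ⟨i, by simp only [List.length_take, List.length_drop] at hlen; omega, rfl⟩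
  · rintro ⟨i, hik, rfl⟩
    exact ⟨⟨i, by omega, rfl⟩, by simp; omega⟩

def oneNonzeroWords (k m : ℕ) : Finset (List ℕ) :=
  insert (List.replicate k 0)
    ((range k ×ˢ Icc 1 m).image fun pv => (List.replicate k 0).set pv.1 pv.2)

lemma card_oneNonzeroWords_le (k m : ℕ) : (oneNonzeroWords k m).card ≤ k * m + 1 :=
  (card_insert_le _ _).trans (Nat.add_le_add_right (card_image_le.trans (by simp)) 1)

lemma mem_oneNonzeroWords {t : List ℕ} {m : ℕ} (hle : ∀ x ∈ t, x ≤ m)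
    (hone : ∀ p q (hp : p < t.length) (hq : q < t.length), t[p] ≠ 0 → t[q] ≠ 0 → p = q) :
    t ∈ oneNonzeroWords t.length m := by
  by_cases h : ∃ p, ∃ hp : p < t.length, t[p] ≠ 0
  · obtain ⟨p, hp, hne⟩ := h
    refine mem_insert_of_mem (mem_image.2 ⟨(p, t[p]), ?_, ?_⟩)
    · simp [hp, Nat.one_le_iff_ne_zero.2 hne, hle _ (List.getElem_mem hp)]
    · refine List.ext_getElem (by simp) fun q _ hq => ?_
      rw [List.getElem_set]
      split_ifs with hpq
      · subst hpq; rfl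
      · rw [List.getElem_replicate]
        by_contra hq0
        exact hpq (hone p q hp hq hne (Ne.symm hq0))
  · push Not at h
    refine mem_insert.2 (Or.inl (List.eq_replicate_iff.2 ⟨rfl, fun x hx => ?_⟩))
    obtain ⟨p, hp, rfl⟩ := List.getElem_of_mem hx
    exact h p hp

lemma subCount_le_of_sparse {S : List ℕ} {m k : ℕ} (hk : 1 ≤ k)
    (hle : ∀ i, S.getD i 0 ≤ m)
    (hsparse : ∀ p q, p < q → S.getD p 0 ≠ 0 → S.getD q 0 ≠ 0 → 2 * p < q) :
    subCount S k ≤ (m + 1) * k := by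
  have hsub : substrings S k ⊆
      (range (k - 1)).image (fun i => (S.drop i).take k) ∪ oneNonzeroWords k m := by
    intro t ht
    obtain ⟨i, hik, rfl⟩ := mem_substrings_iff.1 ht
    rcases Nat.lt_or_ge i (k - 1) with hi | hi
    · exact mem_union_left _ (mem_image_of_mem _ (mem_range.2 hi))
    -- Sparseness leaves at most one nonzero letter in a window starting at `i ≥ k - 1`.
    · have hlen : ((S.drop i).take k).length = k := by simp; omega
      have hget : ∀ p (hp : p < ((S.drop i).take k).length),
          ((S.drop i).take k)[p] = S.getD (i + p) 0 := fun p hp => by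
        rw [List.getElem_take, List.getElem_drop, List.getD_eq_getElem]
      suffices hw : (S.drop i).take k ∈ oneNonzeroWords ((S.drop i).take k).length m by
        rw [hlen] at hw
        exact mem_union_right _ hw
      refine mem_oneNonzeroWords ?_ ?_
      · intro x hx
        obtain ⟨p, hp, rfl⟩ := List.getElem_of_mem hx
        exact hget p hp ▸ hle _
      · intro p q hp hq hp0 hq0
        rw [hget] at hp0 hq0
        rcases lt_trichotomy p q with h | h | h
        · have := hsparse _ _ (by omega) hp0 hq0; omega
        · exact h
        · have := hsparse _ _ (by omega) hq0 hp0; omega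
  calc subCount S k
      ≤ ((range (k - 1)).image (fun i => (S.drop i).take k) ∪ oneNonzeroWords k m).card :=
        card_le_card hsub
    _ ≤ (k - 1) + (k * m + 1) :=
        (card_union_le _ _).trans
          (add_le_add (card_image_le.trans (card_range _).le) (card_oneNonzeroWords_le k m))
    _ = (m + 1) * k := by
        obtain ⟨k, rfl⟩ := Nat.exists_eq_add_of_le' hk
        simp only [Nat.add_sub_cancel]
        ring

lemma delta_le_of_subCount_le {α : Type} [DecidableEq α] {S : List α} {c : ℚ} (hc : 0 ≤ c)
    (h : ∀ k, 1 ≤ k → (subCount S k : ℚ) ≤ c * k) : delta S ≤ c := by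
  unfold delta
  split_ifs
  · exact hc
  · refine sup'_le _ _ fun k hk => ?_
    have hk : 1 ≤ k := (mem_Icc.1 hk).1
    exact (div_le_iff₀ (by exact_mod_cast hk)).2 (h k hk)

lemma le_and_exists_two_pow_of_mem_SRfamily {S : List ℕ} {n m i : ℕ} (hS : S ∈ SRfamily n m)
    (hi : S.getD i 0 ≠ 0) : S.getD i 0 ≤ m ∧ ∃ j, i + 1 = 2 ^ j := by
  obtain ⟨hlen, hS⟩ := hS
  have hin : i < n := by
    by_contra h
    exact hi (List.getD_eq_default _ _ (by omega))
  have := hS i hin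
  split_ifs at this with hb
  · exact ⟨(mem_Icc.1 this).2, (Sn_getD_eq_true_iff hin).1 hb⟩
  · exact absurd this hi

lemma two_mul_lt_of_succ_eq_two_pow {p q a b : ℕ} (hpq : p < q)
    (ha : p + 1 = 2 ^ a) (hb : q + 1 = 2 ^ b) : 2 * p < q := by
  have hab : a < b := (Nat.pow_lt_pow_iff_right (a := 2) (by norm_num)).1 (by omega)
  have : 2 ^ (a + 1) ≤ 2 ^ b := Nat.pow_le_pow_right two_pos hab
  rw [pow_succ] at this
  omega

lemma delta_le_of_mem_SRfamily {S : List ℕ} {n m : ℕ} (hS : S ∈ SRfamily n m) :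
    delta S ≤ (m : ℚ) + 1 := by
  have hle : ∀ i, S.getD i 0 ≤ m := fun i => by
    by_cases hi : S.getD i 0 = 0
    · omega
    · exact (le_and_exists_two_pow_of_mem_SRfamily hS hi).1
  have hsparse : ∀ p q, p < q → S.getD p 0 ≠ 0 → S.getD q 0 ≠ 0 → 2 * p < q := by
    intro p q hpq hp hq
    obtain ⟨a, ha⟩ := (le_and_exists_two_pow_of_mem_SRfamily hS hp).2
    obtain ⟨b, hb⟩ := (le_and_exists_two_pow_of_mem_SRfamily hS hq).2
    exact two_mul_lt_of_succ_eq_two_pow hpq ha hb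
  refine delta_le_of_subCount_le (by positivity) fun k hk => ?_
  exact_mod_cast subCount_le_of_sparse hk hle hsparse

theorem SRfamily_card_and_delta_general (n m : ℕ) (hn : 1 ≤ n) :
    (SRfamily n m).ncard = m ^ (1 + Nat.log 2 n) ∧
    ∀ S ∈ SRfamily n m, delta S ≤ (m : ℚ) + 1 :=
  ⟨by rw [ncard_SRfamily m (by omega), add_comm], fun _ hS => delta_le_of_mem_SRfamily hS⟩

/-- For `n, m ≥ 1`, the family `𝒮^r_n` has exactly `m^(1+⌊log₂ n⌋)` members, and every
`S ∈ 𝒮^r_n` satisfies `δ(S) ≤ m + 1`. -/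
theorem SRfamily_card_and_delta (n m : ℕ) (hn : 1 ≤ n) (hm : 1 ≤ m) :
    (SRfamily n m).ncard = m ^ (1 + Nat.log 2 n) ∧
    ∀ S ∈ SRfamily n m, delta S ≤ (m : ℚ) + 1 :=
  SRfamily_card_and_delta_general n m hn
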